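/- arXiv:2210.08845 — 10 statements merged into one kernel-verified Lean document; each statement's English description precedes it below -/
import Mathlib

section
/- If G acts on a set X, A ⊆ G and Y ⊆ X are nonempty with Y finite, and |A · Y| = |Y|, then the subgroup H generated by A⁻¹A satisfies H ⊆ G_Y, the stabilizer of Y (i.e., every element of H maps Y onto Y). -/
open Pointwise

/-! Each translate `a • Y` with `a ∈ A` lies in `A • Y` and has `|Y| = |A • Y|` elements, so all these
translates coincide with `A • Y`. Hence `(a⁻¹ * b) • Y = a⁻¹ • (a • Y) = Y` for `a, b ∈ A`, and the
stabilizer of `Y`, being a subgroup, contains the subgroup these elements generate. -/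

namespace Set

variable {G X : Type*} [Group G] [MulAction G X]

theorem smul_set_eq_smul_of_ncard_smul_eq {A : Set G} {Y : Set X} (hY : Y.Finite)
    (hcard : (A • Y).ncard = Y.ncard) {a : G} (ha : a ∈ A) : a • Y = A • Y := by
  rcases Y.eq_empty_or_nonempty with rfl | hYne
  · simp
  have hAY : (A • Y).Finite := finite_of_ncard_pos (hcard ▸ hYne.ncard_pos hY)
  exact eq_of_subset_of_ncard_le (smul_set_subset_smul ha) (by rw [hcard, ncard_smul_set]) hAY

theorem closure_inv_mul_le_stabilizer {A : Set G} {Y : Set X}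
    (hA : ∀ a ∈ A, ∀ b ∈ A, a • Y = b • Y) :
    Subgroup.closure {g : G | ∃ a ∈ A, ∃ b ∈ A, g = a⁻¹ * b} ≤ MulAction.stabilizer G Y := by
  rw [Subgroup.closure_le]
  rintro _ ⟨a, ha, b, hb, rfl⟩
  rw [SetLike.mem_coe, MulAction.mem_stabilizer_iff, mul_smul, hA b hb a ha, inv_smul_smul]

end Set

theorem stmt_0_general {G X : Type*} [Group G] [MulAction G X]
    (A : Set G) (Y : Finset X)
    (hcard : (A • (Y : Set X)).ncard = Y.card) :
    ∀ g ∈ Subgroup.closure {g : G | ∃ a ∈ A, ∃ b ∈ A, g = a⁻¹ * b},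
      g • (Y : Set X) = (Y : Set X) := by
  rw [← Set.ncard_coe_finset] at hcard
  have htranslate := fun a (ha : a ∈ A) ↦
    Set.smul_set_eq_smul_of_ncard_smul_eq Y.finite_toSet hcard ha
  exact fun g hg ↦ Set.closure_inv_mul_le_stabilizer
    (fun a ha b hb ↦ (htranslate a ha).trans (htranslate b hb).symm) hg

/-- If `|A · Y| = |Y|` then the subgroup generated by `A⁻¹A` stabilizes `Y`. -/
theorem stmt_0 {G X : Type*} [Group G] [MulAction G X]
    (A : Set G) (Y : Finset X) (hA : A.Nonempty) (hY : Y.Nonempty)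
    (hcard : (A • (Y : Set X)).ncard = Y.card) :
    ∀ g ∈ Subgroup.closure {g : G | ∃ a ∈ A, ∃ b ∈ A, g = a⁻¹ * b},
      g • (Y : Set X) = (Y : Set X) :=
  stmt_0_general A Y hcard
end

section
/- Let G act on X, let α ∈ (0,1], and let A ⊆ G be nonempty and Y ⊆ X finite nonempty. If |A⁻¹ · Y| ≤ ((3 − α)/2)|Y|, then (AA⁻¹)² ⊆ Sym_α(Y) and AA⁻¹ ⊆ Sym_α(Y): i.e., for any u, v ∈ AA⁻¹, |vu · Y ∩ Y| ≥ α|Y|. -/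
/-!
Writing `u = a c⁻¹` with `a, c ∈ A`, the translates `c⁻¹Y` and `a⁻¹Y` both lie in `A⁻¹Y`, so
inclusion–exclusion gives `|uY ∩ Y| = |c⁻¹Y ∩ a⁻¹Y| ≥ 2|Y| - |A⁻¹Y| ≥ ((1 + α)/2)|Y|`.
For `u, v ∈ AA⁻¹`, also `v⁻¹ ∈ AA⁻¹`, and the two large subsets `uY ∩ Y` and `v⁻¹Y ∩ Y` of `Y`
must overlap in at least `α|Y|` points, all of which lie in `uY ∩ v⁻¹Y`, a translate of `vuY ∩ Y`.
-/

open Pointwise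

namespace Finset

variable {α : Type*} [DecidableEq α]

lemma card_add_card_le_card_inter_add_card {s t u : Finset α} (hs : s ⊆ u) (ht : t ⊆ u) :
    #s + #t ≤ #(s ∩ t) + #u := by
  rw [← card_inter_add_card_union]
  exact Nat.add_le_add_left (card_le_card (union_subset hs ht)) _

lemma inv_mem_mul_inv [Group α] {A : Finset α} {u : α} (hu : u ∈ A * A⁻¹) : u⁻¹ ∈ A * A⁻¹ := by
  simpa only [mul_inv_rev, inv_inv] using inv_mem_inv hu

variable {G : Type*} [Group G] [MulAction G α]

lemma card_smul_finset_inter_smul_finset (g h : G) (s : Finset α) :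
    #(g • s ∩ h • s) = #((h⁻¹ * g) • s ∩ s) := by
  rw [← card_smul_finset h⁻¹, smul_finset_inter, smul_smul, inv_smul_smul]

lemma two_mul_card_le_card_smul_inter_add_card_inv_smul [DecidableEq G] {A : Finset G} {u : G}
    (hu : u ∈ A * A⁻¹) (Y : Finset α) : 2 * #Y ≤ #(u • Y ∩ Y) + #(A⁻¹ • Y) := by
  obtain ⟨a, ha, b, hb, rfl⟩ := mem_mul.mp hu
  obtain ⟨c, hc, rfl⟩ := mem_inv.mp hb
  have hsub : ∀ g ∈ A, g⁻¹ • Y ⊆ A⁻¹ • Y := fun g hg => smul_finset_subset_smul (inv_mem_inv hg)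
  have := card_add_card_le_card_inter_add_card (hsub c hc) (hsub a ha)
  rwa [card_smul_finset, card_smul_finset, card_smul_finset_inter_smul_finset, inv_inv,
    ← two_mul] at this

lemma card_smul_inter_add_card_smul_inter_le (u w : G) (Y : Finset α) :
    #(u • Y ∩ Y) + #(w • Y ∩ Y) ≤ #((w⁻¹ * u) • Y ∩ Y) + #Y := by
  rw [← card_smul_finset_inter_smul_finset]
  calc #(u • Y ∩ Y) + #(w • Y ∩ Y)
      ≤ #((u • Y ∩ Y) ∩ (w • Y ∩ Y)) + #Y :=
        card_add_card_le_card_inter_add_card inter_subset_right inter_subset_right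
    _ ≤ #(u • Y ∩ w • Y) + #Y :=
        Nat.add_le_add_right (card_le_card (inter_subset_inter inter_subset_left inter_subset_left)) _

end Finset

open Finset in
theorem stmt_2_general {G X : Type*} [Group G] [MulAction G X] [DecidableEq G] [DecidableEq X]
    (α : ℝ) (hα1 : α ≤ 1)
    (A : Finset G) (Y : Finset X)
    (h : (((A⁻¹ : Finset G) • Y).card : ℝ) ≤ (3 - α) / 2 * Y.card) :
    (∀ u ∈ A * A⁻¹, ∀ v ∈ A * A⁻¹,
        α * Y.card ≤ ((((v * u) • Y) ∩ Y).card : ℝ)) ∧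
    (∀ u ∈ A * A⁻¹, α * Y.card ≤ (((u • Y) ∩ Y).card : ℝ)) := by
  have large : ∀ u ∈ A * A⁻¹, (1 + α) / 2 * #Y ≤ (#(u • Y ∩ Y) : ℝ) := by
    intro u hu
    have hu' : (2 * #Y : ℝ) ≤ #(u • Y ∩ Y) + #(A⁻¹ • Y) := by
      exact_mod_cast two_mul_card_le_card_smul_inter_add_card_inv_smul hu Y
    linarith
  refine ⟨fun u hu v hv => ?_, fun u hu => ?_⟩
  · have overlap : (#(u • Y ∩ Y) + #(v⁻¹ • Y ∩ Y) : ℝ) ≤ #((v * u) • Y ∩ Y) + #Y := by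
      have := card_smul_inter_add_card_smul_inter_le u v⁻¹ Y
      rw [inv_inv] at this
      exact_mod_cast this
    linarith [large u hu, large v⁻¹ (inv_mem_mul_inv hv)]
  · nlinarith [large u hu, (Nat.cast_nonneg #Y : (0 : ℝ) ≤ #Y)]

/-- If `|A⁻¹ · Y| ≤ ((3 − α)/2)|Y|` then `(AA⁻¹)² ⊆ Sym_α(Y)` and `AA⁻¹ ⊆ Sym_α(Y)`. -/
theorem stmt_2 {G X : Type*} [Group G] [MulAction G X] [DecidableEq G] [DecidableEq X]
    (α : ℝ) (hα0 : 0 < α) (hα1 : α ≤ 1)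
    (A : Finset G) (Y : Finset X) (hA : A.Nonempty) (hY : Y.Nonempty)
    (h : (((A⁻¹ : Finset G) • Y).card : ℝ) ≤ (3 - α) / 2 * Y.card) :
    (∀ u ∈ A * A⁻¹, ∀ v ∈ A * A⁻¹,
        α * Y.card ≤ ((((v * u) • Y) ∩ Y).card : ℝ)) ∧
    (∀ u ∈ A * A⁻¹, α * Y.card ≤ (((u • Y) ∩ Y).card : ℝ)) :=
  stmt_2_general α hα1 A Y h
end

section
/- Let G act on X, let A ⊆ G and Y ⊆ X be nonempty with Y finite, and suppose there exists α ∈ (0,1) such that Sym_α(Y) ⊆ AA⁻¹ and |A⁻¹ · Y| ≤ ((3 − α)/2)|Y|. Then AA⁻¹ is a subgroup of G. -/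
/-!
Every `g = ab⁻¹ ∈ AA⁻¹` moves `Y` very little: `b⁻¹Y` and `a⁻¹Y` are two translates of `Y` inside
`A⁻¹Y`, so they overlap in at least `2|Y| - |A⁻¹Y| ≥ ((1 + α)/2)|Y|` points, and `|gY ∩ Y|` is that
overlap. Overlaps with `Y` are almost additive, `|gY ∩ Y| + |hY ∩ Y| ≤ |Y| + |ghY ∩ Y|`, so a
product of two elements of `AA⁻¹` still overlaps `Y` in at least `α|Y|` points, hence lies in
`Sym_α(Y) ⊆ AA⁻¹`. Containing `1` and being closed under inversion is automatic for `AA⁻¹`.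
-/

open Pointwise Finset

namespace Finset

lemma card_add_card_le_card_add_card_inter {α : Type*} [DecidableEq α] {s t u : Finset α}
    (hs : s ⊆ u) (ht : t ⊆ u) : #s + #t ≤ #u + #(s ∩ t) := by
  rw [← card_union_add_card_inter]
  gcongr
  exact union_subset hs ht

section MulAction

variable {G X : Type*} [Group G] [MulAction G X] [DecidableEq X]

lemma card_smul_inter_smul_eq_card_smul_inter (a b : G) (Y : Finset X) :
    #(a • Y ∩ b • Y) = #((b⁻¹ * a) • Y ∩ Y) := by
  rw [← card_smul_finset b⁻¹, smul_finset_inter, smul_smul, smul_smul, inv_mul_cancel, one_smul]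

lemma two_mul_card_le_card_smul_add_card_smul_inter [DecidableEq G] {B : Finset G}
    {Y : Finset X} {g : G} (hg : g ∈ B⁻¹ * B) : 2 * #Y ≤ #(B • Y) + #(g • Y ∩ Y) := by
  obtain ⟨c, hc, b, hb, rfl⟩ := mem_mul.1 hg
  rw [mem_inv'] at hc
  have hcover := card_add_card_le_card_add_card_inter
    (smul_finset_subset_smul (t := Y) hb) (smul_finset_subset_smul hc)
  rwa [card_smul_finset, card_smul_finset, ← two_mul,
    card_smul_inter_smul_eq_card_smul_inter, inv_inv] at hcover

lemma card_smul_inter_add_card_smul_inter_le_s3 (g h : G) (Y : Finset X) :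
    #(g • Y ∩ Y) + #(h • Y ∩ Y) ≤ #Y + #((g * h) • Y ∩ Y) :=
  calc #(g • Y ∩ Y) + #(h • Y ∩ Y)
      = #((g * h) • Y ∩ g • Y) + #(g • Y ∩ Y) := by
        rw [add_comm, card_smul_inter_smul_eq_card_smul_inter, inv_mul_cancel_left]
    _ ≤ #(g • Y) + #((g * h) • Y ∩ g • Y ∩ (g • Y ∩ Y)) :=
        card_add_card_le_card_add_card_inter inter_subset_right inter_subset_left
    _ ≤ #Y + #((g * h) • Y ∩ Y) := by
        rw [card_smul_finset]
        gcongr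
        exacts [inter_subset_left, inter_subset_right]

end MulAction

lemma exists_subgroup_coe_eq_mul_inv {G : Type*} [Group G] [DecidableEq G] {A : Finset G}
    (hA : A.Nonempty) (hmul : ∀ g ∈ A * A⁻¹, ∀ h ∈ A * A⁻¹, g * h ∈ A * A⁻¹) :
    ∃ H : Subgroup G, (H : Set G) = ((A * A⁻¹ : Finset G) : Set G) :=
  ⟨{ carrier := ((A * A⁻¹ : Finset G) : Set G)
     mul_mem' := fun hg hh => hmul _ hg _ hh
     one_mem' := mem_coe.2 <| by simpa [div_eq_mul_inv] using hA.one_mem_div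
     inv_mem' := fun hg => mem_coe.2 <| by
       simpa [mul_inv_rev] using inv_mem_inv (mem_coe.1 hg) }, rfl⟩

end Finset

theorem stmt_3_general {G X : Type*} [Group G] [MulAction G X] [DecidableEq G] [DecidableEq X]
    (A : Finset G) (Y : Finset X) (hA : A.Nonempty)
    (α : ℝ)
    (hsym : ∀ g : G, α * Y.card ≤ (((g • Y) ∩ Y).card : ℝ) → g ∈ A * A⁻¹)
    (h : (((A⁻¹ : Finset G) • Y).card : ℝ) ≤ (3 - α) / 2 * Y.card) :
    ∃ H : Subgroup G, (H : Set G) = ((A * A⁻¹ : Finset G) : Set G) := by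
  refine exists_subgroup_coe_eq_mul_inv hA fun g hg k hk => hsym _ ?_
  have overlap (x : G) (hx : x ∈ A * A⁻¹) : (2 * #Y : ℝ) ≤ #(A⁻¹ • Y) + #(x • Y ∩ Y) :=
    mod_cast two_mul_card_le_card_smul_add_card_smul_inter (by rwa [inv_inv])
  have almost_additive : (#(g • Y ∩ Y) + #(k • Y ∩ Y) : ℝ) ≤ #Y + #((g * k) • Y ∩ Y) :=
    mod_cast card_smul_inter_add_card_smul_inter_le_s3 g k Y
  linarith [overlap g hg, overlap k hk]

/-- If `Sym_α(Y) ⊆ AA⁻¹` and `|A⁻¹ · Y| ≤ ((3 − α)/2)|Y|` for some `α ∈ (0,1)`,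
then `AA⁻¹` is a subgroup of `G`. -/
theorem stmt_3 {G X : Type*} [Group G] [MulAction G X] [DecidableEq G] [DecidableEq X]
    (A : Finset G) (Y : Finset X) (hA : A.Nonempty) (hY : Y.Nonempty)
    (α : ℝ) (hα0 : 0 < α) (hα1 : α < 1)
    (hsym : ∀ g : G, α * Y.card ≤ (((g • Y) ∩ Y).card : ℝ) → g ∈ A * A⁻¹)
    (h : (((A⁻¹ : Finset G) • Y).card : ℝ) ≤ (3 - α) / 2 * Y.card) :
    ∃ H : Subgroup G, (H : Set G) = ((A * A⁻¹ : Finset G) : Set G) :=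
  stmt_3_general A Y hA α hsym h
end

section
/- Let S be a set and f : P_fin(S) → ℝ a submodular function attaining a minimum m on nonempty finite subsets. If A₁ and A₂ are two atoms of f (nonempty finite sets achieving m, of minimal cardinality among such sets), then A₁ = A₂ or A₁ ∩ A₂ = ∅. -/
/-! If two atoms `A₁, A₂` meet, submodularity squeezes `f (A₁ ∩ A₂) + f (A₁ ∪ A₂) ≤ 2m` while both terms
are at least `m`, so `A₁ ∩ A₂` is a fragment; by minimality of cardinality it is then all of `A₁` and
all of `A₂`. -/

theorem Finset.apply_inter_eq_of_submodular {S : Type*} [DecidableEq S] {f : Finset S → ℝ} {m : ℝ}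
    (hsub : ∀ A B : Finset S, f (A ∩ B) + f (A ∪ B) ≤ f A + f B)
    (hmin : ∀ A : Finset S, A.Nonempty → m ≤ f A) {A B : Finset S}
    (hA : f A = m) (hB : f B = m) (hAB : (A ∩ B).Nonempty) :
    f (A ∩ B) = m := by
  have hunion : m ≤ f (A ∪ B) := hmin _ (hAB.mono (inter_subset_left.trans subset_union_left))
  linarith [hsub A B, hmin _ hAB]

/-- Two atoms of a submodular function are equal or disjoint. -/
theorem stmt_7 {S : Type*} [DecidableEq S]
    (f : Finset S → ℝ) (m : ℝ)
    (hsub : ∀ A B : Finset S, f (A ∩ B) + f (A ∪ B) ≤ f A + f B)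
    (hmin : ∀ A : Finset S, A.Nonempty → m ≤ f A)
    (A₁ A₂ : Finset S)
    (hA₁ : A₁.Nonempty ∧ f A₁ = m ∧
      ∀ B : Finset S, B.Nonempty → f B = m → A₁.card ≤ B.card)
    (hA₂ : A₂.Nonempty ∧ f A₂ = m ∧
      ∀ B : Finset S, B.Nonempty → f B = m → A₂.card ≤ B.card) :
    A₁ = A₂ ∨ A₁ ∩ A₂ = ∅ := by
  obtain ⟨-, hf₁, hcard₁⟩ := hA₁
  obtain ⟨-, hf₂, hcard₂⟩ := hA₂
  rcases (A₁ ∩ A₂).eq_empty_or_nonempty with hdisj | hmeet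
  · exact Or.inr hdisj
  have hfrag : f (A₁ ∩ A₂) = m := Finset.apply_inter_eq_of_submodular hsub hmin hf₁ hf₂ hmeet
  left
  calc A₁ = A₁ ∩ A₂ :=
        (Finset.eq_of_subset_of_card_le Finset.inter_subset_left (hcard₁ _ hmeet hfrag)).symm
    _ = A₂ := Finset.eq_of_subset_of_card_le Finset.inter_subset_right (hcard₂ _ hmeet hfrag)
end

section
/- Let G be a group and f : P_fin(G) → ℝ a G-invariant submodular function (f(gA) = f(A) for all g ∈ G, finite A ⊆ G) attaining a minimum m on nonempty finite subsets. Then there exists a unique atom H of f containing the identity 1, H is a finite subgroup of G, and every atom of f is a left coset gH; consequently the atoms partition G. -/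
/-!
By submodularity, two intersecting atoms `A`, `B` force `A ∩ B` to be a fragment, hence by
minimality `A = A ∩ B = B`: distinct atoms are disjoint. Translates of atoms are atoms, so for
the atom `H` through `1` and any `h ∈ H`, the atoms `h • H` and `H` share `h` and coincide.
Thus `H` is its own stabilizer, a subgroup, and the atom through any `g` is `g • H`.
-/

open Pointwise

/-- An atom for `f` with minimum value `m`: a nonempty finite set achieving `m`,
of minimal cardinality among such sets. -/
def IsAtomFor {S : Type*} (f : Finset S → ℝ) (m : ℝ) (A : Finset S) : Prop :=
  A.Nonempty ∧ f A = m ∧ ∀ B : Finset S, B.Nonempty → f B = m → A.card ≤ B.card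

theorem IsAtomFor.eq_of_inter_nonempty {S : Type*} [DecidableEq S] {f : Finset S → ℝ} {m : ℝ}
    (hsub : ∀ A B : Finset S, f (A ∩ B) + f (A ∪ B) ≤ f A + f B)
    (hmin : ∀ A : Finset S, A.Nonempty → m ≤ f A)
    {A B : Finset S} (hA : IsAtomFor f m A) (hB : IsAtomFor f m B) (hAB : (A ∩ B).Nonempty) :
    A = B := by
  have hinter : f (A ∩ B) = m := by
    linarith [hsub A B, hmin _ hAB, hmin (A ∪ B) (hA.1.mono Finset.subset_union_left), hA.2.1,
      hB.2.1]
  have eA : A ∩ B = A :=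
    Finset.eq_of_subset_of_card_le Finset.inter_subset_left (hA.2.2 _ hAB hinter)
  have eB : A ∩ B = B :=
    Finset.eq_of_subset_of_card_le Finset.inter_subset_right (hB.2.2 _ hAB hinter)
  exact eA.symm.trans eB

theorem IsAtomFor.smul {G S : Type*} [Group G] [MulAction G S] [DecidableEq S]
    {f : Finset S → ℝ} {m : ℝ} (hinv : ∀ (g : G) (A : Finset S), f (g • A) = f A)
    {A : Finset S} (hA : IsAtomFor f m A) (g : G) : IsAtomFor f m (g • A) := by
  refine ⟨hA.1.smul_finset, (hinv g A).trans hA.2.1, fun B hB hfB => ?_⟩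
  rw [Finset.card_smul_finset]
  exact hA.2.2 B hB hfB

theorem exists_isAtomFor {S : Type*} {f : Finset S → ℝ} {m : ℝ}
    (hatt : ∃ A : Finset S, A.Nonempty ∧ f A = m) : ∃ A : Finset S, IsAtomFor f m A := by
  classical
  have hcard : ∃ n, ∃ A : Finset S, A.Nonempty ∧ f A = m ∧ A.card = n :=
    let ⟨A, hA, hfA⟩ := hatt; ⟨A.card, A, hA, hfA, rfl⟩
  obtain ⟨A, hA, hfA, hAcard⟩ := Nat.find_spec hcard
  exact ⟨A, hA, hfA, fun B hB hfB => hAcard ▸ Nat.find_min' hcard ⟨B, hB, hfB, rfl⟩⟩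

section Group

variable {G : Type*} [Group G] [DecidableEq G] {f : Finset G → ℝ} {m : ℝ}

theorem IsAtomFor.eq_smul_of_mem
    (hsub : ∀ A B : Finset G, f (A ∩ B) + f (A ∪ B) ≤ f A + f B)
    (hinv : ∀ (g : G) (A : Finset G), f (g • A) = f A)
    (hmin : ∀ A : Finset G, A.Nonempty → m ≤ f A)
    {A H : Finset G} (hA : IsAtomFor f m A) (hH : IsAtomFor f m H) (h1 : (1 : G) ∈ H)
    {g : G} (hg : g ∈ A) : A = g • H :=
  hA.eq_of_inter_nonempty hsub hmin (hH.smul hinv g)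
    ⟨g, Finset.mem_inter.2 ⟨hg, by simpa using Finset.smul_mem_smul_finset (a := g) h1⟩⟩

theorem IsAtomFor.coe_stabilizer_eq
    (hsub : ∀ A B : Finset G, f (A ∩ B) + f (A ∪ B) ≤ f A + f B)
    (hinv : ∀ (g : G) (A : Finset G), f (g • A) = f A)
    (hmin : ∀ A : Finset G, A.Nonempty → m ≤ f A)
    {H : Finset G} (hH : IsAtomFor f m H) (h1 : (1 : G) ∈ H) :
    (MulAction.stabilizer G H : Set G) = H := by
  ext g
  simp only [SetLike.mem_coe, MulAction.mem_stabilizer_iff]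
  constructor
  · intro hgH
    rw [← hgH]
    simpa using Finset.smul_mem_smul_finset (a := g) h1
  · intro hg
    exact (hH.eq_smul_of_mem hsub hinv hmin hH h1 hg).symm

end Group

/-- For a `G`-invariant submodular function on finite subsets of `G` attaining its
minimum `m`, there is a unique atom `H` containing `1`; it is a (finite) subgroup of `G`
and every atom is a left coset `gH`. -/
theorem stmt_8 {G : Type*} [Group G] [DecidableEq G]
    (f : Finset G → ℝ) (m : ℝ)
    (hsub : ∀ A B : Finset G, f (A ∩ B) + f (A ∪ B) ≤ f A + f B)
    (hinv : ∀ (g : G) (A : Finset G), f (g • A) = f A)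
    (hmin : ∀ A : Finset G, A.Nonempty → m ≤ f A)
    (hatt : ∃ A : Finset G, A.Nonempty ∧ f A = m) :
    ∃ H : Finset G, (1 : G) ∈ H ∧ IsAtomFor f m H ∧
      (∀ H' : Finset G, (1 : G) ∈ H' → IsAtomFor f m H' → H' = H) ∧
      (∃ S : Subgroup G, (S : Set G) = (H : Set G)) ∧
      (∀ A : Finset G, IsAtomFor f m A → ∃ g : G, A = g • H) ∧
      (∀ g : G, IsAtomFor f m (g • H)) := by
  obtain ⟨A, hA⟩ := exists_isAtomFor hatt
  obtain ⟨a, ha⟩ := hA.1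
  have hH : IsAtomFor f m (a⁻¹ • A) := hA.smul hinv a⁻¹
  have h1 : (1 : G) ∈ a⁻¹ • A := by simpa using Finset.smul_mem_smul_finset (a := a⁻¹) ha
  refine ⟨a⁻¹ • A, h1, hH, ?_, ⟨_, hH.coe_stabilizer_eq hsub hinv hmin h1⟩, ?_,
    hH.smul hinv⟩
  · intro H' h1H' hH'
    simpa using hH'.eq_smul_of_mem hsub hinv hmin hH h1 h1H'
  · intro B hB
    obtain ⟨g, hg⟩ := hB.1
    exact ⟨g, hB.eq_smul_of_mem hsub hinv hmin hH h1 hg⟩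
end

section
/- Let G act on X, let A ⊆ G be finite nonempty and Y ⊆ X finite, and suppose |A · Y| ≤ α|A| for some α ≥ 0. Then there exists a nonempty subset B ⊆ A such that |CB · Y| ≤ α|CB| for every finite subset C of G. -/
/-!
Take `B ⊆ A` nonempty minimising the ratio `β = |B • Y| / |B|`; then `β ≤ α`, and every
`B' ⊆ B` satisfies `β |B'| ≤ |B' • Y|`. Adding one element `x` to `C` adds the translate
`x • B` to `C * B`, overlapping it in `x • B'` with `B' = B ∩ x⁻¹ • (C * B)`, so `|C * B|` grows
by exactly `|B| - |B'|`, while `|(C * B) • Y|` grows by at most `|B • Y| - |B' • Y|`, since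
`x • (B' • Y)` is already covered. By minimality the second increment is at most `β` times the
first, and induction on `C` gives `|(C * B) • Y| ≤ β |C * B|`.
-/

open Pointwise Finset

theorem exists_nonempty_subset_ratio_mul_card_le {α : Type*} (A : Finset α) (hA : A.Nonempty)
    (f : Finset α → ℕ) :
    ∃ B ⊆ A, B.Nonempty ∧ ∀ B' ⊆ A, ((f B : ℝ) / #B) * #B' ≤ f B' := by
  obtain ⟨B, hB, hBmin⟩ := exists_min_image {s ∈ A.powerset | s.Nonempty}
    (fun s => (f s : ℝ) / #s) ⟨A, by simpa using hA⟩
  obtain ⟨hBA, hBne⟩ := by simpa using hB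
  refine ⟨B, hBA, hBne, fun B' hB'A => ?_⟩
  obtain rfl | hB'ne := B'.eq_empty_or_nonempty
  · simp
  rw [← le_div_iff₀ (by exact_mod_cast hB'ne.card_pos)]
  exact hBmin B' (by simpa using ⟨hB'A, hB'ne⟩)

section

variable {G X : Type*} [Group G] [MulAction G X] [DecidableEq G] [DecidableEq X]

theorem card_smul_union_add_card_inter_inv_smul (x : G) (B K : Finset G) :
    #(x • B ∪ K) + #(B ∩ x⁻¹ • K) = #K + #B := by
  rw [← card_smul_finset x (B ∩ x⁻¹ • K), smul_finset_inter, smul_inv_smul,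
    card_union_add_card_inter, card_smul_finset, add_comm]

theorem card_smul_union_smul_add_card_inter_inv_smul_smul_le (x : G) (B K : Finset G)
    (Y : Finset X) :
    #((x • B ∪ K) • Y) + #((B ∩ x⁻¹ • K) • Y) ≤ #(K • Y) + #(B • Y) := by
  have hcover : x • ((B ∩ x⁻¹ • K) • Y) ⊆ x • (B • Y) ∩ K • Y := by
    rw [← smul_assoc, ← smul_assoc, smul_finset_inter, smul_inv_smul]
    exact inter_smul_subset
  calc #((x • B ∪ K) • Y) + #((B ∩ x⁻¹ • K) • Y)
      = #(x • (B • Y) ∪ K • Y) + #(x • ((B ∩ x⁻¹ • K) • Y)) := by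
        rw [union_smul, smul_assoc, card_smul_finset]
    _ ≤ #(x • (B • Y) ∪ K • Y) + #(x • (B • Y) ∩ K • Y) := by gcongr
    _ = #(K • Y) + #(B • Y) := by
        rw [card_union_add_card_inter, card_smul_finset, add_comm]

theorem card_mul_smul_le_of_forall_subset (B : Finset G) (Y : Finset X) (β : ℝ)
    (hB : (#(B • Y) : ℝ) ≤ β * #B) (hmin : ∀ B' ⊆ B, β * #B' ≤ #(B' • Y)) (C : Finset G) :
    (#((C * B) • Y) : ℝ) ≤ β * #(C * B) := by
  induction C using Finset.induction_on with
  | empty => simp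
  | @insert x C _ ih =>
    have hstep : insert x C * B = x • B ∪ C * B := by
      rw [insert_eq, union_mul, singleton_mul]
    have hsize : (#(insert x C * B) : ℝ) + #(B ∩ x⁻¹ • (C * B)) = #(C * B) + #B := by
      rw [hstep]; exact_mod_cast card_smul_union_add_card_inter_inv_smul x B (C * B)
    have hgrowth : (#((insert x C * B) • Y) : ℝ) + #((B ∩ x⁻¹ • (C * B)) • Y)
        ≤ #((C * B) • Y) + #(B • Y) := by
      rw [hstep]; exact_mod_cast card_smul_union_smul_add_card_inter_inv_smul_smul_le x B _ Y
    have hoverlap := hmin (B ∩ x⁻¹ • (C * B)) inter_subset_left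
    linear_combination hgrowth + ih + hB + hoverlap - β * hsize

end

theorem stmt_12_general {G X : Type*} [Group G] [MulAction G X] [DecidableEq G] [DecidableEq X]
    (A : Finset G) (hA : A.Nonempty) (Y : Finset X)
    (α : ℝ)
    (h : ((A • Y).card : ℝ) ≤ α * A.card) :
    ∃ B : Finset G, B ⊆ A ∧ B.Nonempty ∧
      ∀ C : Finset G, (((C * B) • Y).card : ℝ) ≤ α * (C * B).card := by
  obtain ⟨B, hBA, hBne, hmin⟩ := exists_nonempty_subset_ratio_mul_card_le A hA (fun s => #(s • Y))
  set β : ℝ := #(B • Y) / #B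
  have hβα : β ≤ α :=
    le_of_mul_le_mul_right ((hmin A subset_rfl).trans h) (by exact_mod_cast hA.card_pos)
  have hβB : (#(B • Y) : ℝ) ≤ β * #B :=
    (div_mul_cancel₀ _ (by exact_mod_cast hBne.card_pos.ne')).ge
  refine ⟨B, hBA, hBne, fun C => ?_⟩
  calc (#((C * B) • Y) : ℝ)
      ≤ β * #(C * B) :=
        card_mul_smul_le_of_forall_subset B Y β hβB (fun B' hB' => hmin B' (hB'.trans hBA)) C
    _ ≤ α * #(C * B) := by gcongr

/-- Petridis–Tao theorem for group actions: if `|A · Y| ≤ α|A|`, then there is a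
nonempty `B ⊆ A` with `|CB · Y| ≤ α|CB|` for every finite `C ⊆ G`. -/
theorem stmt_12 {G X : Type*} [Group G] [MulAction G X] [DecidableEq G] [DecidableEq X]
    (A : Finset G) (hA : A.Nonempty) (Y : Finset X)
    (α : ℝ) (hα : 0 ≤ α)
    (h : ((A • Y).card : ℝ) ≤ α * A.card) :
    ∃ B : Finset G, B ⊆ A ∧ B.Nonempty ∧
      ∀ C : Finset G, (((C * B) • Y).card : ℝ) ≤ α * (C * B).card :=
  stmt_12_general A hA Y α h
end

section
/- Let G be an Abelian group acting on X, A ⊆ G finite nonempty, Y ⊆ X finite nonempty, with |A · Y| ≤ α|Y| for some α ≥ 0. Then there exists a nonempty subset Z ⊆ Y such that |AC · Z| ≤ α|C · Z| for every finite subset C of G. -/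
open Pointwise Finset

/-!
Choose `Z ⊆ Y` nonempty minimising the ratio `|A • Z| / |Z|`; this minimum is at most `α`.
Petridis' induction on `C` then shows `|AC • Z| ≤ (|A • Z| / |Z|) |C • Z|`: adding an element `x`
to `C` enlarges `C • Z` by the translate `x • Z` minus `x • W`, where `W = Z ∩ x⁻¹ • (C • Z)`, and
enlarges `AC • Z` by at most `x • (A • Z)` minus `x • (A • W)`, since commutativity puts
`x • (A • W) = A • (x • W)` inside `AC • Z`. Minimality of the ratio at `Z` bounds `|A • W|`
from below, which closes the induction.
-/

lemma Finset.exists_subset_forall_mul_card_le {α : Type*} (f : Finset α → ℕ) {Y : Finset α}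
    (hY : Y.Nonempty) : ∃ Z ⊆ Y, Z.Nonempty ∧ ∀ W ⊆ Y, f Z * #W ≤ f W * #Z := by
  have hYmem : Y ∈ Y.powerset.filter Finset.Nonempty := mem_filter.2 ⟨mem_powerset_self Y, hY⟩
  obtain ⟨Z, hZmem, hmin⟩ :=
    exists_min_image _ (fun S ↦ (f S : ℚ) / #S) ⟨Y, hYmem⟩
  obtain ⟨hZY, hZ⟩ := mem_filter.1 hZmem
  refine ⟨Z, mem_powerset.1 hZY, hZ, fun W hWY ↦ ?_⟩
  rcases W.eq_empty_or_nonempty with rfl | hW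
  · simp
  have hratio := hmin W (mem_filter.2 ⟨mem_powerset.2 hWY, hW⟩)
  rw [div_le_div_iff₀ (by exact_mod_cast hZ.card_pos) (by exact_mod_cast hW.card_pos)] at hratio
  exact_mod_cast hratio

section Petridis

variable {G X : Type*} [DecidableEq G] [DecidableEq X]

lemma card_insert_smul_add_card_inter [Group G] [MulAction G X] (x : G) (C : Finset G)
    (Z : Finset X) : #(insert x C • Z) + #(Z ∩ x⁻¹ • (C • Z)) = #Z + #(C • Z) := by
  have hinter : x • (Z ∩ x⁻¹ • (C • Z)) = x • Z ∩ C • Z := by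
    rw [smul_finset_inter, smul_inv_smul]
  rw [insert_eq, union_smul, singleton_smul, ← card_smul_finset x (Z ∩ _), hinter,
    card_union_add_card_inter, card_smul_finset]

variable [CommGroup G] [MulAction G X]

lemma card_mul_insert_smul_add_card_smul_inter_le (A C : Finset G) (x : G) (Z : Finset X) :
    #((A * insert x C) • Z) + #(A • (Z ∩ x⁻¹ • (C • Z))) ≤ #((A * C) • Z) + #(A • Z) := by
  have hsplit : (A * insert x C) • Z = (A * C) • Z ∪ x • (A • Z) := by
    rw [mul_smul, mul_smul, insert_eq, union_smul, singleton_smul, smul_union,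
      smul_comm A x Z, union_comm]
  have hsub : x • (A • (Z ∩ x⁻¹ • (C • Z))) ⊆ (A * C) • Z ∩ x • (A • Z) := by
    rw [smul_comm x A, smul_finset_inter, smul_inv_smul, mul_smul, ← smul_comm A x Z]
    exact subset_inter (smul_subset_smul_left inter_subset_right)
      (smul_subset_smul_left inter_subset_left)
  rw [hsplit, ← card_smul_finset x (A • (Z ∩ _)), ← card_smul_finset x (A • Z),
    ← card_union_add_card_inter ((A * C) • Z) (x • (A • Z))]
  exact Nat.add_le_add_left (card_le_card hsub) _

/-- Petridis' inequality for a set `Z` minimising `|A • W| / |W|` among its subsets. -/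
theorem card_mul_smul_mul_card_le {A : Finset G} {Z : Finset X}
    (hmin : ∀ W ⊆ Z, #(A • Z) * #W ≤ #(A • W) * #Z) (C : Finset G) :
    #((A * C) • Z) * #Z ≤ #(A • Z) * #(C • Z) := by
  induction C using Finset.induction_on with
  | empty => simp
  | insert x C _ ih =>
    have hstep := Nat.mul_le_mul_right #Z (card_mul_insert_smul_add_card_smul_inter_le A C x Z)
    have hcard := congrArg (#(A • Z) * ·) (card_insert_smul_add_card_inter x C Z)
    have hW := hmin _ (inter_subset_left : Z ∩ x⁻¹ • (C • Z) ⊆ Z)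
    simp only [add_mul, mul_add] at hstep hcard
    linarith

end Petridis

theorem stmt_14_general {G X : Type*} [CommGroup G] [MulAction G X] [DecidableEq G] [DecidableEq X]
    (A : Finset G) (Y : Finset X) (hY : Y.Nonempty)
    (α : ℝ)
    (h : ((A • Y).card : ℝ) ≤ α * Y.card) :
    ∃ Z : Finset X, Z ⊆ Y ∧ Z.Nonempty ∧
      ∀ C : Finset G, (((A * C) • Z).card : ℝ) ≤ α * ((C • Z).card : ℝ) := by
  obtain ⟨Z, hZY, hZ, hmin⟩ := exists_subset_forall_mul_card_le (fun S ↦ #(A • S)) hY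
  refine ⟨Z, hZY, hZ, fun C ↦ ?_⟩
  have hpetridis : (#((A * C) • Z) * #Z : ℝ) ≤ #(A • Z) * #(C • Z) := by
    exact_mod_cast card_mul_smul_mul_card_le (fun W hW ↦ hmin W (hW.trans hZY)) C
  have hratio : (#(A • Z) * #Y : ℝ) ≤ #(A • Y) * #Z := by exact_mod_cast hmin Y subset_rfl
  have hZpos : (0 : ℝ) < #Z := by exact_mod_cast hZ.card_pos
  have hYpos : (0 : ℝ) < #Y := by exact_mod_cast hY.card_pos
  refine le_of_mul_le_mul_right ?_ (mul_pos hZpos hYpos)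
  calc (#((A * C) • Z) : ℝ) * (#Z * #Y) ≤ #(A • Z) * #Y * #(C • Z) := by nlinarith
    _ ≤ #(A • Y) * #Z * #(C • Z) := by gcongr
    _ ≤ α * #Y * #Z * #(C • Z) := by gcongr
    _ = α * #(C • Z) * (#Z * #Y) := by ring

/-- Petridis–Tao type theorem for actions of Abelian groups: if `|A · Y| ≤ α|Y|`,
there is a nonempty `Z ⊆ Y` with `|AC · Z| ≤ α|C · Z|` for every finite `C ⊆ G`. -/
theorem stmt_14 {G X : Type*} [CommGroup G] [MulAction G X] [DecidableEq G] [DecidableEq X]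
    (A : Finset G) (hA : A.Nonempty) (Y : Finset X) (hY : Y.Nonempty)
    (α : ℝ) (hα : 0 ≤ α)
    (h : ((A • Y).card : ℝ) ≤ α * Y.card) :
    ∃ Z : Finset X, Z ⊆ Y ∧ Z.Nonempty ∧
      ∀ C : Finset G, (((A * C) • Z).card : ℝ) ≤ α * ((C • Z).card : ℝ) :=
  stmt_14_general A Y hY α h
end

section
/- Let G be an Abelian group acting on X, A ⊆ G finite nonempty, Y ⊆ X finite nonempty, with |A · Y| ≤ α|Y|. Then there exists a nonempty subset Z ⊆ Y such that |Aⁿ · Z| ≤ αⁿ|Z| for every integer n ≥ 1. -/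
/-!
Choose `Z ⊆ Y` minimising `|A • Z| / |Z|`; the minimum `β` is at most `α`. Petridis' induction
on `C` gives `|(A * C) • Z| ≤ β |C • Z|` for every finite `C`: adding `x` to `C` enlarges `C • Z`
by `|Z| - |Z'|`, where `Z' = {z ∈ Z | x • z ∈ C • Z}`, and enlarges `(A * C) • Z` by at most
`|A • Z| - |A • Z'|`, since by commutativity `x • (A • Z') = A • (x • Z') ⊆ (A * C) • Z`;
minimality gives `β |Z'| ≤ |A • Z'|`. Iterating with `C = Aⁿ` gives `|Aⁿ • Z| ≤ βⁿ |Z|`.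
-/

open Pointwise Finset

namespace Finset

section SMul

variable {G X : Type*} [SMul G X] [DecidableEq X]

lemma exists_subset_minimizing_card_smul_div (A : Finset G) {Y : Finset X} (hY : Y.Nonempty) :
    ∃ Z ⊆ Y, Z.Nonempty ∧ (#(A • Z) : ℝ) / #Z ≤ #(A • Y) / #Y ∧
      ∀ Z' ⊆ Z, (#(A • Z) : ℝ) / #Z * #Z' ≤ #(A • Z') := by
  have hYmem : Y ∈ {W ∈ Y.powerset | W.Nonempty} := by simp [hY]
  obtain ⟨Z, hZ, hmin⟩ :=
    exists_min_image {W ∈ Y.powerset | W.Nonempty} (fun W ↦ (#(A • W) : ℝ) / #W) ⟨Y, hYmem⟩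
  rw [mem_filter, mem_powerset] at hZ
  refine ⟨Z, hZ.1, hZ.2, hmin Y hYmem, fun Z' hZ' ↦ ?_⟩
  obtain rfl | hZ'ne := Z'.eq_empty_or_nonempty
  · simp
  rw [← le_div_iff₀ (mod_cast hZ'ne.card_pos)]
  exact hmin Z' (mem_filter.2 ⟨mem_powerset.2 (hZ'.trans hZ.1), hZ'ne⟩)

end SMul

section Group

variable {G X : Type*} [Group G] [MulAction G X] [DecidableEq G] [DecidableEq X]

lemma card_insert_smul_add_card_filter (x : G) (C : Finset G) (Z : Finset X) :
    #(insert x C • Z) + #{z ∈ Z | x • z ∈ C • Z} = #(C • Z) + #Z := by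
  have hinter : x • {z ∈ Z | x • z ∈ C • Z} = x • Z ∩ C • Z := by
    ext y
    simp only [mem_smul_finset, mem_filter, mem_inter]
    constructor
    · rintro ⟨z, ⟨hz, hxz⟩, rfl⟩
      exact ⟨⟨z, hz, rfl⟩, hxz⟩
    · rintro ⟨⟨z, hz, rfl⟩, hxz⟩
      exact ⟨z, ⟨hz, hxz⟩, rfl⟩
  rw [← card_smul_finset x {z ∈ Z | x • z ∈ C • Z}, hinter, insert_eq, union_smul,
    singleton_smul, card_union_add_card_inter, card_smul_finset, add_comm]

end Group

section CommGroup

variable {G X : Type*} [CommGroup G] [MulAction G X] [DecidableEq G] [DecidableEq X]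

lemma smul_smul_filter_subset_mul_smul (x : G) (A C : Finset G) (Z : Finset X) :
    x • (A • {z ∈ Z | x • z ∈ C • Z}) ⊆ (A * C) • Z := by
  rw [smul_comm, mul_smul]
  gcongr
  intro y hy
  obtain ⟨z, hz, rfl⟩ := mem_smul_finset.1 hy
  exact (mem_filter.1 hz).2

lemma card_mul_insert_smul_add_card_smul_filter_le (x : G) (A C : Finset G) (Z : Finset X) :
    #((A * insert x C) • Z) + #(A • {z ∈ Z | x • z ∈ C • Z}) ≤ #((A * C) • Z) + #(A • Z) := by
  have hunion : (A * insert x C) • Z = x • (A • Z) ∪ (A * C) • Z := by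
    rw [mul_smul, insert_eq, union_smul, smul_union, singleton_smul, smul_comm, mul_smul]
  have hinter : x • (A • {z ∈ Z | x • z ∈ C • Z}) ⊆ x • (A • Z) ∩ (A * C) • Z :=
    subset_inter (by gcongr; exact filter_subset _ _) (smul_smul_filter_subset_mul_smul x A C Z)
  calc #((A * insert x C) • Z) + #(A • {z ∈ Z | x • z ∈ C • Z})
      ≤ #(x • (A • Z) ∪ (A * C) • Z) + #(x • (A • Z) ∩ (A * C) • Z) := by
        rw [hunion, ← card_smul_finset x (A • _)]
        gcongr
    _ = #((A * C) • Z) + #(A • Z) := by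
        rw [card_union_add_card_inter, card_smul_finset, add_comm]

theorem pluennecke_petridis_inequality_smul {A : Finset G} {Z : Finset X} {β : ℝ}
    (hAZ : #(A • Z) ≤ β * #Z) (hmin : ∀ Z' ⊆ Z, β * #Z' ≤ #(A • Z')) (C : Finset G) :
    #((A * C) • Z) ≤ β * #(C • Z) := by
  induction C using Finset.induction_on with
  | empty => simp
  | insert x C _ ih =>
    set Z' := {z ∈ Z | x • z ∈ C • Z}
    have hcard : (#(insert x C • Z) : ℝ) + #Z' = #(C • Z) + #Z :=
      mod_cast card_insert_smul_add_card_filter x C Z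
    have hle : (#((A * insert x C) • Z) : ℝ) + #(A • Z') ≤ #((A * C) • Z) + #(A • Z) :=
      mod_cast card_mul_insert_smul_add_card_smul_filter_le x A C Z
    have hZ' := hmin Z' (filter_subset _ Z)
    calc (#((A * insert x C) • Z) : ℝ) ≤ #((A * C) • Z) + #(A • Z) - #(A • Z') := by linarith
      _ ≤ β * #(C • Z) + β * #Z - β * #Z' := by linarith
      _ = β * #(insert x C • Z) := by linear_combination -β * hcard

lemma card_pow_smul_le {A : Finset G} {Z : Finset X} {β : ℝ} (hβ : 0 ≤ β)
    (hAZ : #(A • Z) ≤ β * #Z) (hmin : ∀ Z' ⊆ Z, β * #Z' ≤ #(A • Z')) (n : ℕ) :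
    #(A ^ n • Z) ≤ β ^ n * #Z := by
  induction n with
  | zero => simp
  | succ n ih =>
    calc (#(A ^ (n + 1) • Z) : ℝ) = #((A * A ^ n) • Z) := by rw [pow_succ']
      _ ≤ β * #(A ^ n • Z) := pluennecke_petridis_inequality_smul hAZ hmin _
      _ ≤ β * (β ^ n * #Z) := by gcongr
      _ = β ^ (n + 1) * #Z := by ring

end CommGroup

end Finset

theorem stmt_15_general {G X : Type*} [CommGroup G] [MulAction G X] [DecidableEq G] [DecidableEq X]
    (A : Finset G) (Y : Finset X) (hY : Y.Nonempty)
    (α : ℝ)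
    (h : ((A • Y).card : ℝ) ≤ α * Y.card) :
    ∃ Z : Finset X, Z ⊆ Y ∧ Z.Nonempty ∧
      ∀ n : ℕ, 1 ≤ n → (((A ^ n) • Z).card : ℝ) ≤ α ^ n * Z.card := by
  obtain ⟨Z, hZY, hZ, hβY, hmin⟩ := exists_subset_minimizing_card_smul_div A hY
  set β : ℝ := #(A • Z) / #Z
  have hβ : 0 ≤ β := by positivity
  have hAZ : #(A • Z) ≤ β * #Z := (div_mul_cancel₀ _ (mod_cast hZ.card_pos.ne')).ge
  have hβα : β ≤ α := hβY.trans ((div_le_iff₀ (mod_cast hY.card_pos)).2 h)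
  refine ⟨Z, hZY, hZ, fun n _ ↦ ?_⟩
  calc (#(A ^ n • Z) : ℝ) ≤ β ^ n * #Z := card_pow_smul_le hβ hAZ hmin n
    _ ≤ α ^ n * #Z := by gcongr

/-- If `G` is Abelian and `|A · Y| ≤ α|Y|`, there is a nonempty `Z ⊆ Y` with
`|Aⁿ · Z| ≤ αⁿ|Z|` for all `n ≥ 1`. -/
theorem stmt_15 {G X : Type*} [CommGroup G] [MulAction G X] [DecidableEq G] [DecidableEq X]
    (A : Finset G) (hA : A.Nonempty) (Y : Finset X) (hY : Y.Nonempty)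
    (α : ℝ) (hα : 0 ≤ α)
    (h : ((A • Y).card : ℝ) ≤ α * Y.card) :
    ∃ Z : Finset X, Z ⊆ Y ∧ Z.Nonempty ∧
      ∀ n : ℕ, 1 ≤ n → (((A ^ n) • Z).card : ℝ) ≤ α ^ n * Z.card :=
  stmt_15_general A Y hY α h
end

section
/- Let (ρ, V) be a linear representation of a group G over a field k, A ⊆ G finite nonempty, and Y ⊆ V a finite-dimensional subspace with dim⟨A · Y⟩ ≤ α|A| for some α ≥ 0. Then there exists a nonempty subset B ⊆ A such that dim⟨CB · Y⟩ ≤ α|CB| for every finite subset C of G. -/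
open Pointwise

section Aux

variable {G k V : Type*} [Group G] [DecidableEq G]
    [Field k] [AddCommGroup V] [Module k V]
    (ρ : Representation k G V) (Y : Submodule k V) [FiniteDimensional k Y]

noncomputable def MMod (S : Finset G) : Submodule k V :=
  S.sup (fun g => Y.map (ρ g))

lemma MMod_eq_iSup (S : Finset G) : MMod ρ Y S = ⨆ g ∈ S, Y.map (ρ g) :=
  Finset.sup_eq_iSup _ _

instance MMod_fd (S : Finset G) : FiniteDimensional k (MMod ρ Y S) :=
  Submodule.finiteDimensional_finset_sup _ _

lemma MMod_mono {S T : Finset G} (h : S ⊆ T) : MMod ρ Y S ≤ MMod ρ Y T :=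
  Finset.sup_mono h

lemma MMod_union (S T : Finset G) : MMod ρ Y (S ∪ T) = MMod ρ Y S ⊔ MMod ρ Y T :=
  Finset.sup_union

lemma MMod_smul (g : G) (S : Finset G) :
    MMod ρ Y (g • S) = (MMod ρ Y S).map (ρ g) := by
  classical
  induction S using Finset.induction with
  | empty => simp [MMod]
  | insert a s hx ih =>
    have : g • (insert a s) = insert (g * a) (g • s) := by
      simp [Finset.smul_finset_insert, smul_eq_mul]
    rw [this]
    simp only [MMod, Finset.sup_insert] at *
    rw [ih, Submodule.map_sup]
    congr 1
    rw [map_mul ρ, Module.End.mul_eq_comp, ← Submodule.map_comp]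

noncomputable def rhoEquiv (g : G) : V ≃ₗ[k] V :=
  LinearEquiv.ofLinear (ρ g) (ρ g⁻¹)
    (by rw [← Module.End.mul_eq_comp, ← map_mul, mul_inv_cancel, map_one]; rfl)
    (by rw [← Module.End.mul_eq_comp, ← map_mul, inv_mul_cancel, map_one]; rfl)

lemma finrank_MMod_smul (g : G) (S : Finset G) :
    Module.finrank k (MMod ρ Y (g • S)) = Module.finrank k (MMod ρ Y S) := by
  rw [MMod_smul]
  exact LinearEquiv.finrank_map_eq (rhoEquiv ρ g) _

end Aux

/-- Petridis–Tao type theorem for linear representations: if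
`dim⟨A · Y⟩ ≤ α|A|`, there is a nonempty `B ⊆ A` such that
`dim⟨CB · Y⟩ ≤ α|CB|` for every finite `C ⊆ G`. -/
theorem stmt_18 {G k V : Type*} [Group G] [DecidableEq G]
    [Field k] [AddCommGroup V] [Module k V]
    (ρ : Representation k G V)
    (A : Finset G) (hA : A.Nonempty)
    (Y : Submodule k V) [FiniteDimensional k Y]
    (α : ℝ) (hα : 0 ≤ α)
    (h : (Module.finrank k ↥(⨆ a ∈ A, Y.map (ρ a)) : ℝ) ≤ α * A.card) :
    ∃ B : Finset G, B ⊆ A ∧ B.Nonempty ∧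
      ∀ C : Finset G,
        (Module.finrank k ↥(⨆ g ∈ (C * B : Finset G), Y.map (ρ g)) : ℝ) ≤
          α * (C * B).card := by
  classical
  set R : Finset G → ℝ := fun S => (Module.finrank k (MMod ρ Y S) : ℝ) with hR
  -- choose a minimizer of R S / |S| over nonempty subsets of A
  have hsn : (A.powerset.filter (·.Nonempty)).Nonempty :=
    ⟨A, by simp [Finset.mem_filter, hA]⟩
  obtain ⟨B, hBmem, hBmin⟩ :=
    Finset.exists_min_image (A.powerset.filter (·.Nonempty))
      (fun S => R S / S.card) hsn
  rw [Finset.mem_filter, Finset.mem_powerset] at hBmem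
  obtain ⟨hBA, hBne⟩ := hBmem
  set lam : ℝ := R B / B.card with hlam
  have hBcard : (0 : ℝ) < B.card := by exact_mod_cast hBne.card_pos
  have hlam0 : 0 ≤ lam := div_nonneg (by positivity) hBcard.le
  have hmin : ∀ S : Finset G, S ⊆ A → lam * S.card ≤ R S := by
    intro S hS
    rcases S.eq_empty_or_nonempty with rfl | hSne
    · simp [hR, MMod]
    · have hScard : (0 : ℝ) < S.card := by exact_mod_cast hSne.card_pos
      have := hBmin S (by simp [Finset.mem_filter, Finset.mem_powerset, hS, hSne])
      rw [div_le_div_iff₀ hBcard hScard] at this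
      calc lam * S.card = R B / B.card * S.card := rfl
        _ ≤ R S := by
            rw [div_mul_eq_mul_div, div_le_iff₀ hBcard]
            linarith
  have hRB : R B = lam * B.card := by
    rw [hlam, div_mul_cancel₀]
    exact hBcard.ne'
  have hlamα : lam ≤ α := by
    have hAcard : (0 : ℝ) < A.card := by exact_mod_cast hA.card_pos
    have hRA : R A ≤ α * A.card := by
      show (Module.finrank k (MMod ρ Y A) : ℝ) ≤ _
      rw [MMod_eq_iSup]; exact h
    have := hBmin A (by simp [Finset.mem_filter, Finset.mem_powerset, hA])
    calc lam ≤ R A / A.card := this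
      _ ≤ α := by rw [div_le_iff₀ hAcard]; linarith
  refine ⟨B, hBA, hBne, ?_⟩
  have key : ∀ C : Finset G, R (C * B) ≤ lam * (C * B).card := by
    intro C
    induction C using Finset.induction with
    | empty => simp only [hR, Finset.empty_mul]; rw [show MMod ρ Y (∅ : Finset G) = ⊥ from Finset.sup_empty]; simp
    | insert g C hg ih =>
      have hins : insert g C * B = (g • B) ∪ C * B := by
        rw [Finset.insert_eq, Finset.union_mul, Finset.singleton_mul]
      set B' : Finset G := B.filter (fun b => g * b ∈ C * B) with hB'
      have hinter : (g • B) ∩ (C * B) = g • B' := by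
        ext x
        simp only [Finset.mem_inter, Finset.mem_smul_finset, hB', Finset.mem_filter,
          smul_eq_mul]
        constructor
        · rintro ⟨⟨b, hb, rfl⟩, hx⟩; exact ⟨b, ⟨hb, hx⟩, rfl⟩
        · rintro ⟨b, ⟨hb, hx⟩, rfl⟩; exact ⟨⟨b, hb, rfl⟩, hx⟩
      -- cardinalities
      have hcard : ((insert g C * B).card : ℝ) + B'.card = B.card + (C * B).card := by
        have := Finset.card_union_add_card_inter (g • B) (C * B)
        rw [hinter, Finset.card_smul_finset, Finset.card_smul_finset] at this
        rw [hins]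
        exact_mod_cast this
      -- ranks
      have hsubmod :
          (Module.finrank k ↥(MMod ρ Y (g • B) ⊔ MMod ρ Y (C * B)) : ℝ) +
            Module.finrank k ↥(MMod ρ Y (g • B) ⊓ MMod ρ Y (C * B)) =
            (Module.finrank k (MMod ρ Y (g • B)) : ℝ) +
              Module.finrank k (MMod ρ Y (C * B)) := by
        exact_mod_cast congrArg (fun n : ℕ => (n : ℝ))
          (Submodule.finrank_sup_add_finrank_inf_eq (MMod ρ Y (g • B)) (MMod ρ Y (C * B)))
      have hRnew : R (insert g C * B) =
          (Module.finrank k ↥(MMod ρ Y (g • B) ⊔ MMod ρ Y (C * B)) : ℝ) := by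
        show (Module.finrank k (MMod ρ Y (insert g C * B)) : ℝ) = _
        rw [hins, MMod_union]
      have hRgB : (Module.finrank k (MMod ρ Y (g • B)) : ℝ) = R B := by
        show _ = (Module.finrank k (MMod ρ Y B) : ℝ)
        exact_mod_cast finrank_MMod_smul ρ Y g B
      have hinf : (R B' : ℝ) ≤
          (Module.finrank k ↥(MMod ρ Y (g • B) ⊓ MMod ρ Y (C * B)) : ℝ) := by
        have h1 : MMod ρ Y (g • B') ≤ MMod ρ Y (g • B) ⊓ MMod ρ Y (C * B) := by
          rw [← hinter]
          exact le_inf (MMod_mono ρ Y Finset.inter_subset_left)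
            (MMod_mono ρ Y Finset.inter_subset_right)
        have h2 := Submodule.finrank_mono (t := MMod ρ Y (g • B) ⊓ MMod ρ Y (C * B)) h1
        rw [finrank_MMod_smul] at h2
        show (Module.finrank k (MMod ρ Y B') : ℝ) ≤ _
        exact_mod_cast h2
      have hB'range : lam * B'.card ≤ R B' :=
        hmin B' ((Finset.filter_subset _ _).trans hBA)
      have hlamcard : lam * ((insert g C * B).card : ℝ) =
          lam * B.card + lam * (C * B).card - lam * B'.card := by
        have : ((insert g C * B).card : ℝ) = B.card + (C * B).card - B'.card := by
          linarith
        rw [this]; ring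
      linarith
  intro C
  have h1 := key C
  have h2 : lam * ((C * B).card : ℝ) ≤ α * (C * B).card := by
    apply mul_le_mul_of_nonneg_right hlamα (Nat.cast_nonneg _)
  calc (Module.finrank k ↥(⨆ g ∈ (C * B : Finset G), Y.map (ρ g)) : ℝ)
      = R (C * B) := by
        show _ = (Module.finrank k (MMod ρ Y (C * B)) : ℝ)
        rw [MMod_eq_iSup]
    _ ≤ α * (C * B).card := le_trans h1 h2
end

section
/- Let (ρ, V) be a representation of an Abelian group G, A ⊆ G finite nonempty, and Y a nonzero finite-dimensional subspace of V with dim(A · Y) ≤ α · dim Y. Then there exists a nonzero subspace Z ⊆ Y such that dim(AC · Z) ≤ α · dim(C · Z) for every finite subset C of G; consequently dim(Aⁿ · Z) ≤ αⁿ dim Z for all n ≥ 1. -/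
/-!
Choose a nonzero `Z ≤ Y` minimising `dim (A · Z) / dim Z =: α₀`; then `α₀ ≤ α`. The defect
`f W = dim (A · W) - α₀ dim W` vanishes at `Z`, is nonnegative on subspaces of `Z`, and, `G` being
Abelian, is invariant under translation, so it is nonnegative on subspaces of every `c • Z`.
Since `f` is submodular,
`f (c • Z + C · Z) ≤ f (c • Z) + f (C · Z) - f (c • Z ⊓ C · Z) ≤ f (C · Z)`, and induction
on `C` gives `f (C · Z) ≤ 0`, i.e. `dim (A C · Z) ≤ α₀ dim (C · Z)`. Taking `C = Aⁿ⁻¹`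
repeatedly gives the power bound.
-/

open Pointwise Module

namespace Representation

variable {G k V : Type*} [Field k] [AddCommGroup V] [Module k V]

section Monoid

variable [Monoid G] (ρ : Representation k G V)

/-- `C · W` in the notation of the paper. -/
noncomputable def translateSpan (C : Finset G) (W : Submodule k V) : Submodule k V :=
  ⨆ g ∈ C, W.map (ρ g)

theorem map_mul_eq_map_map (a b : G) (W : Submodule k V) :
    W.map (ρ (a * b)) = (W.map (ρ b)).map (ρ a) := by
  rw [map_mul, Module.End.mul_eq_comp, Submodule.map_comp]

theorem translateSpan_eq_sup (C : Finset G) (W : Submodule k V) :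
    ρ.translateSpan C W = C.sup fun g => W.map (ρ g) :=
  (Finset.sup_eq_iSup _ _).symm

theorem translateSpan_empty (W : Submodule k V) : ρ.translateSpan ∅ W = ⊥ := by
  rw [translateSpan_eq_sup, Finset.sup_empty]

theorem translateSpan_one (W : Submodule k V) : ρ.translateSpan 1 W = W := by
  rw [translateSpan_eq_sup, Finset.sup_one, map_one, Module.End.one_eq_id, Submodule.map_id]

theorem translateSpan_insert [DecidableEq G] (c : G) (C : Finset G) (W : Submodule k V) :
    ρ.translateSpan (insert c C) W = W.map (ρ c) ⊔ ρ.translateSpan C W := by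
  simp only [translateSpan_eq_sup, Finset.sup_insert]

theorem translateSpan_mono (C : Finset G) {W₁ W₂ : Submodule k V} (h : W₁ ≤ W₂) :
    ρ.translateSpan C W₁ ≤ ρ.translateSpan C W₂ :=
  iSup₂_mono fun _ _ => Submodule.map_mono h

theorem translateSpan_sup (C : Finset G) (W₁ W₂ : Submodule k V) :
    ρ.translateSpan C (W₁ ⊔ W₂) = ρ.translateSpan C W₁ ⊔ ρ.translateSpan C W₂ := by
  simp only [translateSpan_eq_sup, Submodule.map_sup]
  exact Finset.sup_sup

theorem translateSpan_mul [DecidableEq G] (A C : Finset G) (W : Submodule k V) :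
    ρ.translateSpan (A * C) W = ρ.translateSpan A (ρ.translateSpan C W) := by
  simp only [translateSpan, Submodule.map_iSup, ← map_mul_eq_map_map]
  apply le_antisymm
  · refine iSup₂_le fun g hg => ?_
    obtain ⟨a, ha, c, hc, rfl⟩ := Finset.mem_mul.mp hg
    exact le_iSup₂_of_le a ha (le_iSup₂_of_le c hc le_rfl)
  · exact iSup₂_le fun a ha => iSup₂_le fun c hc =>
      le_iSup₂_of_le (a * c) (Finset.mul_mem_mul ha hc) le_rfl

instance (C : Finset G) (W : Submodule k V) [FiniteDimensional k W] :
    FiniteDimensional k (ρ.translateSpan C W) := by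
  rw [translateSpan_eq_sup]
  infer_instance

/-- Submodularity of `W ↦ dim (A · W) - α dim W`: the modular law for `X, U` and for
`A · X, A · U`, together with `A · (X ⊓ U) ≤ A · X ⊓ A · U`. -/
theorem finrank_translateSpan_sup_le (A : Finset G) (α : ℝ) {X U : Submodule k V}
    [FiniteDimensional k X] [FiniteDimensional k U]
    (hX : (finrank k (ρ.translateSpan A X) : ℝ) ≤ α * finrank k X)
    (hU : (finrank k (ρ.translateSpan A U) : ℝ) ≤ α * finrank k U)
    (hXU : α * finrank k ↥(X ⊓ U) ≤ finrank k (ρ.translateSpan A (X ⊓ U))) :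
    (finrank k (ρ.translateSpan A (X ⊔ U)) : ℝ) ≤ α * finrank k ↥(X ⊔ U) := by
  have hinf : (finrank k (ρ.translateSpan A (X ⊓ U)) : ℝ) ≤
      finrank k ↥(ρ.translateSpan A X ⊓ ρ.translateSpan A U) :=
    Nat.cast_le.mpr <| Submodule.finrank_mono <|
      le_inf (ρ.translateSpan_mono A inf_le_left) (ρ.translateSpan_mono A inf_le_right)
  have hmod := congrArg (Nat.cast : ℕ → ℝ) (Submodule.finrank_sup_add_finrank_inf_eq X U)
  have hmodA := congrArg (Nat.cast : ℕ → ℝ)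
    (Submodule.finrank_sup_add_finrank_inf_eq (ρ.translateSpan A X) (ρ.translateSpan A U))
  push_cast at hmod hmodA
  rw [translateSpan_sup]
  linear_combination hX + hU + hXU + hinf + hmodA - α * hmod

theorem finrank_translateSpan_pow_le [DecidableEq G] (A : Finset G) {α : ℝ} (hα : 0 ≤ α)
    (Z : Submodule k V)
    (hA : ∀ C : Finset G,
      (finrank k (ρ.translateSpan (A * C) Z) : ℝ) ≤ α * finrank k (ρ.translateSpan C Z))
    (n : ℕ) : (finrank k (ρ.translateSpan (A ^ n) Z) : ℝ) ≤ α ^ n * finrank k Z := by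
  induction n with
  | zero => rw [pow_zero, translateSpan_one, pow_zero, one_mul]
  | succ n ih =>
    calc (finrank k (ρ.translateSpan (A ^ (n + 1)) Z) : ℝ)
        ≤ α * finrank k (ρ.translateSpan (A ^ n) Z) := by rw [pow_succ']; exact hA _
      _ ≤ α * (α ^ n * finrank k Z) := by gcongr
      _ = α ^ (n + 1) * finrank k Z := by ring

theorem exists_forall_le_finrank_translateSpan (A : Finset G) {Y : Submodule k V}
    [FiniteDimensional k Y] (hY : Y ≠ ⊥) :
    ∃ Z ≤ Y, Z ≠ ⊥ ∧ ∀ W ≤ Y,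
      (finrank k (ρ.translateSpan A Z) / finrank k Z : ℝ) * finrank k W ≤
        finrank k (ρ.translateSpan A W) := by
  let ratio (W : Submodule k V) : ℝ := finrank k (ρ.translateSpan A W) / finrank k W
  have hfin : (ratio '' {W | W ≤ Y ∧ W ≠ ⊥}).Finite := by
    refine ((Set.finite_Iic (finrank k (ρ.translateSpan A Y), finrank k Y)).image
      fun p : ℕ × ℕ => (p.1 / p.2 : ℝ)).subset ?_
    rintro _ ⟨W, ⟨hWY, -⟩, rfl⟩
    have : FiniteDimensional k W := Submodule.finiteDimensional_of_le hWY
    exact ⟨(finrank k (ρ.translateSpan A W), finrank k W),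
      ⟨Submodule.finrank_mono (ρ.translateSpan_mono A hWY), Submodule.finrank_mono hWY⟩, rfl⟩
  obtain ⟨Z, ⟨hZY, hZ⟩, hZmin⟩ := hfin.exists_minimalFor' ratio _ ⟨Y, le_rfl, hY⟩
  refine ⟨Z, hZY, hZ, fun W hWY => ?_⟩
  have : FiniteDimensional k W := Submodule.finiteDimensional_of_le hWY
  by_cases hW : W = ⊥
  · subst hW
    simp
  have hWpos : (0 : ℝ) < finrank k W :=
    Nat.cast_pos.mpr (Submodule.one_le_finrank_iff.mpr hW)
  rw [← le_div_iff₀ hWpos]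
  rcases le_total (ratio Z) (ratio W) with h | h
  · exact h
  · exact hZmin ⟨hWY, hW⟩ h

end Monoid

section CommGroup

variable [CommGroup G] (ρ : Representation k G V)

theorem finrank_map_apply (g : G) (W : Submodule k V) :
    finrank k (W.map (ρ g)) = finrank k W :=
  (LinearMap.GeneralLinearGroup.toLinearEquiv (ρ.asGroupHom g)).finrank_map_eq W

theorem map_inv_map_apply (g : G) (W : Submodule k V) : (W.map (ρ g)).map (ρ g⁻¹) = W := by
  rw [← map_mul_eq_map_map, inv_mul_cancel, map_one, Module.End.one_eq_id, Submodule.map_id]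

theorem translateSpan_map (C : Finset G) (g : G) (W : Submodule k V) :
    ρ.translateSpan C (W.map (ρ g)) = (ρ.translateSpan C W).map (ρ g) := by
  simp only [translateSpan, Submodule.map_iSup, ← map_mul_eq_map_map, mul_comm]

theorem finrank_translateSpan_map (C : Finset G) (g : G) (W : Submodule k V) :
    finrank k (ρ.translateSpan C (W.map (ρ g))) = finrank k (ρ.translateSpan C W) := by
  rw [translateSpan_map, finrank_map_apply]

theorem le_finrank_translateSpan_of_le_map (A : Finset G) {α : ℝ} {Z : Submodule k V}
    (hZ : ∀ W ≤ Z, α * finrank k W ≤ finrank k (ρ.translateSpan A W)) (g : G) :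
    ∀ W ≤ Z.map (ρ g), α * finrank k W ≤ finrank k (ρ.translateSpan A W) := by
  intro W hW
  have hW' : W = (W.map (ρ g⁻¹)).map (ρ g) := by simpa using (ρ.map_inv_map_apply g⁻¹ W).symm
  rw [hW', finrank_map_apply, finrank_translateSpan_map]
  exact hZ _ ((Submodule.map_mono hW).trans (ρ.map_inv_map_apply g Z).le)

theorem finrank_translateSpan_mul_le [DecidableEq G] (A : Finset G) {α : ℝ}
    (Z : Submodule k V) [FiniteDimensional k Z]
    (hZ : (finrank k (ρ.translateSpan A Z) : ℝ) ≤ α * finrank k Z)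
    (hmin : ∀ W ≤ Z, α * finrank k W ≤ finrank k (ρ.translateSpan A W)) (C : Finset G) :
    (finrank k (ρ.translateSpan (A * C) Z) : ℝ) ≤ α * finrank k (ρ.translateSpan C Z) := by
  induction C using Finset.induction_on with
  | empty => rw [Finset.mul_empty, translateSpan_empty]; simp
  | insert c C _ ih =>
    rw [translateSpan_mul, translateSpan_insert]
    refine ρ.finrank_translateSpan_sup_le A α ?_ ?_ ?_
    · rwa [finrank_translateSpan_map, finrank_map_apply]
    · rwa [← translateSpan_mul]
    · exact ρ.le_finrank_translateSpan_of_le_map A hmin c _ inf_le_left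

end CommGroup

end Representation

theorem stmt_19_general {G k V : Type*} [CommGroup G] [DecidableEq G]
    [Field k] [AddCommGroup V] [Module k V]
    (ρ : Representation k G V)
    (A : Finset G)
    (Y : Submodule k V) [FiniteDimensional k Y] (hY : Y ≠ ⊥)
    (α : ℝ)
    (h : (Module.finrank k ↥(⨆ a ∈ A, Y.map (ρ a)) : ℝ) ≤ α * Module.finrank k Y) :
    ∃ Z : Submodule k V, Z ≤ Y ∧ Z ≠ ⊥ ∧
      (∀ C : Finset G,
        (Module.finrank k ↥(⨆ g ∈ (A * C : Finset G), Z.map (ρ g)) : ℝ) ≤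
          α * Module.finrank k ↥(⨆ g ∈ C, Z.map (ρ g))) ∧
      (∀ n : ℕ, 1 ≤ n →
        (Module.finrank k ↥(⨆ g ∈ (A ^ n : Finset G), Z.map (ρ g)) : ℝ) ≤
          α ^ n * Module.finrank k Z) := by
  obtain ⟨Z, hZY, hZ, hmin⟩ := ρ.exists_forall_le_finrank_translateSpan A hY
  have : FiniteDimensional k Z := Submodule.finiteDimensional_of_le hZY
  set α₀ : ℝ := finrank k (ρ.translateSpan A Z) / finrank k Z
  have hα₀ : 0 ≤ α₀ := by positivity
  have hYpos : (0 : ℝ) < finrank k Y :=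
    Nat.cast_pos.mpr (Submodule.one_le_finrank_iff.mpr hY)
  have hα₀α : α₀ ≤ α := le_of_mul_le_mul_right ((hmin Y le_rfl).trans h) hYpos
  have hZα₀ : (finrank k (ρ.translateSpan A Z) : ℝ) = α₀ * finrank k Z :=
    (div_mul_cancel₀ _ (Nat.cast_pos.mpr (Submodule.one_le_finrank_iff.mpr hZ)).ne').symm
  have hAC := ρ.finrank_translateSpan_mul_le A Z hZα₀.le fun W hW => hmin W (hW.trans hZY)
  refine ⟨Z, hZY, hZ,
    fun C => (hAC C).trans (mul_le_mul_of_nonneg_right hα₀α (Nat.cast_nonneg _)), fun n _ => ?_⟩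
  exact (ρ.finrank_translateSpan_pow_le A hα₀ Z hAC n).trans
    (mul_le_mul_of_nonneg_right (pow_le_pow_left₀ hα₀ hα₀α n) (Nat.cast_nonneg _))

/-- For a representation of an Abelian group `G`: if `dim(A · Y) ≤ α · dim Y` with
`Y ≠ 0` finite-dimensional, there is a nonzero subspace `Z ⊆ Y` such that
`dim(AC · Z) ≤ α · dim(C · Z)` for every finite `C ⊆ G`; consequently
`dim(Aⁿ · Z) ≤ αⁿ · dim Z` for all `n ≥ 1`. -/
theorem stmt_19 {G k V : Type*} [CommGroup G] [DecidableEq G]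
    [Field k] [AddCommGroup V] [Module k V]
    (ρ : Representation k G V)
    (A : Finset G) (hA : A.Nonempty)
    (Y : Submodule k V) [FiniteDimensional k Y] (hY : Y ≠ ⊥)
    (α : ℝ) (hα : 0 ≤ α)
    (h : (Module.finrank k ↥(⨆ a ∈ A, Y.map (ρ a)) : ℝ) ≤ α * Module.finrank k Y) :
    ∃ Z : Submodule k V, Z ≤ Y ∧ Z ≠ ⊥ ∧
      (∀ C : Finset G,
        (Module.finrank k ↥(⨆ g ∈ (A * C : Finset G), Z.map (ρ g)) : ℝ) ≤
          α * Module.finrank k ↥(⨆ g ∈ C, Z.map (ρ g))) ∧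
      (∀ n : ℕ, 1 ≤ n →
        (Module.finrank k ↥(⨆ g ∈ (A ^ n : Finset G), Z.map (ρ g)) : ℝ) ≤
          α ^ n * Module.finrank k Z) :=
  stmt_19_general ρ A Y hY α h
end
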